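/- arXiv:2305.11748 — 2 statements merged into one kernel-verified Lean document; each statement's English description precedes it below -/
import Mathlib

section
/- For any graph $G$, any edge $e = vw \in E(G)$, and any nonnegative integer $q$: $\operatorname{Z}_q(G) \le \operatorname{Z}_q(G - e) + 2$. -/
open SimpleGraph

namespace ZqGame

variable {V : Type*}

/-- A blue vertex `v` forces the white vertex `w`, where only white vertices in
`Wallow` are taken into account (used for Rule 3, where play is restricted to the
subgraph induced by the blue set together with the returned white components). -/
def ForceIn (G : SimpleGraph V) (B : Set V) (Wallow : Set V) (v w : V) : Prop :=
  v ∈ B ∧ w ∉ B ∧ w ∈ Wallow ∧ G.Adj v w ∧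
    ∀ u, G.Adj v u → u ∉ B → u ∈ Wallow → u = w

/-- The standard color change rule: `v` is blue and `w` is its unique white neighbor. -/
def Force (G : SimpleGraph V) (B : Set V) (v w : V) : Prop :=
  ForceIn G B Set.univ v w

/-- The white connected component of `G - B` containing the white vertex `w`. -/
def WhiteComp (G : SimpleGraph V) (B : Set V) (w : V) : Set V :=
  {x | Relation.ReflTransGen (fun a b => G.Adj a b ∧ a ∉ B ∧ b ∉ B) w x}

/-- `W` is a white component, i.e. a connected component of `G - B`. -/
def IsWhiteComp (G : SimpleGraph V) (B : Set V) (W : Set V) : Prop :=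
  ∃ w, w ∉ B ∧ W = WhiteComp G B w

/-- An active vertex: a blue vertex with at least two white neighbors. -/
def Active (G : SimpleGraph V) (B : Set V) (a : V) : Prop :=
  a ∈ B ∧ ∃ w₁ w₂, w₁ ≠ w₂ ∧ G.Adj a w₁ ∧ G.Adj a w₂ ∧ w₁ ∉ B ∧ w₂ ∉ B

end ZqGame

namespace ZqGame

variable {V : Type*}

/-- `Win G q B t` : in the `Z_q`-forcing game on `G` starting from blue set `B`,
Blue has a strategy spending at most `t` tokens that colors every vertex blue
against any (adversarial) play by White.
* `all` : every vertex is already blue.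
* `rule1` : spend one token to color an arbitrary vertex blue.
* `rule2` : a blue vertex with exactly one white neighbor forces it, for free.
* `rule3` : Blue announces a collection `𝒲` of at least `q + 1` white components;
  for every nonempty sub-collection `𝒮` that White may return, Blue can perform a
  Rule 2 force (`vf 𝒮 → wf 𝒮`) on the subgraph induced by `B` together with `⋃ 𝒮`,
  and continue from the resulting position. -/
inductive Win (G : SimpleGraph V) (q : ℕ) : Set V → ℕ → Prop
  | all (B : Set V) (t : ℕ) : (∀ v, v ∈ B) → Win G q B t
  | rule1 (B : Set V) (t : ℕ) (v : V) : Win G q (insert v B) t → Win G q B (t + 1)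
  | rule2 (B : Set V) (t : ℕ) (v w : V) :
      Force G B v w → Win G q (insert w B) t → Win G q B t
  | rule3 (B : Set V) (t : ℕ) (𝒲 : Finset (Set V))
      (vf wf : Finset (Set V) → V) :
      (∀ W ∈ 𝒲, IsWhiteComp G B W) → q + 1 ≤ 𝒲.card →
      (∀ 𝒮 : Finset (Set V), 𝒮 ⊆ 𝒲 → 𝒮.Nonempty →
        ForceIn G B (⋃₀ (𝒮 : Set (Set V))) (vf 𝒮) (wf 𝒮)) →
      (∀ 𝒮 : Finset (Set V), 𝒮 ⊆ 𝒲 → 𝒮.Nonempty →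
        Win G q (insert (wf 𝒮) B) t) →
      Win G q B t

/-- `Z_q(G, B)` : the minimum number of additional tokens Blue must spend to win the
`Z_q`-forcing game on `G` starting from blue set `B`. -/
noncomputable def cost (G : SimpleGraph V) (q : ℕ) (B : Set V) : ℕ :=
  sInf {t | Win G q B t}

/-- `Z_q(G)` : the `Z_q`-forcing number of `G`. -/
noncomputable def Zq (G : SimpleGraph V) (q : ℕ) : ℕ := cost G q ∅

end ZqGame

open SimpleGraph


/-! Blue spends two tokens on `v` and `w`. From then on every edge at a white vertex is the same
in `G` and in `G - vw`, so the two games coincide. This needs that extra blue vertices never hurt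
Blue. The only delicate case is Rule 3: from a larger blue set the white components are finer,
and each of them has to be matched with a set of the old components whose force it can reuse. -/

namespace ZqGame

variable {V : Type*} {G H : SimpleGraph V} {q t t' : ℕ} {B B' U U' : Set V}

lemma mem_whiteComp_self (G : SimpleGraph V) (B : Set V) (x : V) : x ∈ WhiteComp G B x :=
  Relation.ReflTransGen.refl

lemma whiteComp_antitone (hB : B ⊆ B') (x : V) : WhiteComp G B' x ⊆ WhiteComp G B x :=
  fun y => Relation.ReflTransGen.mono (fun _ _ h =>
    ⟨h.1, fun ha => h.2.1 (hB ha), fun hb => h.2.2 (hB hb)⟩) x y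

lemma IsWhiteComp.eq_whiteComp_of_mem {W : Set V} (hW : IsWhiteComp G B W) {x : V}
    (hx : x ∈ W) : W = WhiteComp G B x := by
  obtain ⟨w, -, rfl⟩ := hW
  have : Std.Symm fun a b => G.Adj a b ∧ a ∉ B ∧ b ∉ B :=
    ⟨fun _ _ h => ⟨h.1.symm, h.2.2, h.2.1⟩⟩
  ext y
  exact ⟨fun hy => (Std.Symm.symm _ _ hx).trans hy, hx.trans⟩

lemma ForceIn.of_subset {a b : V} (h : ForceIn G B U a b) (hB : B ⊆ B') (hb : b ∉ B')
    (hbU : b ∈ U') (hU : U' ⊆ U) : ForceIn G B' U' a b :=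
  ⟨hB h.1, hb, hbU, h.2.2.2.1,
    fun u hu huB huU => h.2.2.2.2 u hu (fun h => huB (hB h)) (hU huU)⟩

/-- The component of `G - B'` containing the vertex forced when White returns all of `𝒯` is
matched with `𝒯` itself; the others come from recursing on `𝒯` minus the component of `G - B`
containing that vertex. -/
lemma exists_rule3_of_subset (hBB' : B ⊆ B') (vf wf : Finset (Set V) → V)
    (𝒯 : Finset (Set V)) (hcomp : ∀ W ∈ 𝒯, IsWhiteComp G B W)
    (hforce : ∀ 𝒮 ⊆ 𝒯, 𝒮.Nonempty → ForceIn G B (⋃₀ (𝒮 : Set (Set V))) (vf 𝒮) (wf 𝒮))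
    (hwhite : ∀ 𝒮 ⊆ 𝒯, 𝒮.Nonempty → wf 𝒮 ∉ B') :
    ∃ (𝒞 : Finset (Set V)) (sel : Finset (Set V) → Finset (Set V)),
      𝒞.card = 𝒯.card ∧ (∀ C ∈ 𝒞, IsWhiteComp G B' C ∧ C ⊆ ⋃₀ (𝒯 : Set (Set V))) ∧
      ∀ 𝒮 ⊆ 𝒞, 𝒮.Nonempty → sel 𝒮 ⊆ 𝒯 ∧ (sel 𝒮).Nonempty ∧
        ForceIn G B' (⋃₀ (𝒮 : Set (Set V))) (vf (sel 𝒮)) (wf (sel 𝒮)) := by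
  classical
  induction 𝒯 using Finset.strongInduction with
  | H 𝒯 ih =>
  rcases 𝒯.eq_empty_or_nonempty with rfl | hne
  · exact ⟨∅, fun _ => ∅, rfl, by simp, fun 𝒮 h𝒮 hne => by simp_all⟩
  obtain ⟨W₀, hW₀, hxW₀⟩ := (hforce 𝒯 subset_rfl hne).2.2.1
  set x := wf 𝒯
  set C₀ := WhiteComp G B' x
  have hW₀x : W₀ = WhiteComp G B x := (hcomp W₀ hW₀).eq_whiteComp_of_mem hxW₀
  have hx : x ∉ ⋃₀ ((𝒯.erase W₀ : Finset (Set V)) : Set (Set V)) := by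
    rintro ⟨W, hW, hxW⟩
    have hW : W ∈ 𝒯.erase W₀ := hW
    exact Finset.ne_of_mem_erase hW <|
      ((hcomp W (Finset.mem_of_mem_erase hW)).eq_whiteComp_of_mem hxW).trans hW₀x.symm
  obtain ⟨𝒞, sel, hcard, h𝒞, hsel⟩ := ih (𝒯.erase W₀) (Finset.erase_ssubset hW₀)
    (fun W hW => hcomp W (Finset.mem_of_mem_erase hW))
    (fun 𝒮 h𝒮 => hforce 𝒮 (h𝒮.trans (Finset.erase_subset _ _)))
    (fun 𝒮 h𝒮 => hwhite 𝒮 (h𝒮.trans (Finset.erase_subset _ _)))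
  have hC₀ : C₀ ∉ 𝒞 := fun h => hx ((h𝒞 C₀ h).2 (mem_whiteComp_self G B' x))
  have h𝒞' : ∀ C ∈ insert C₀ 𝒞, IsWhiteComp G B' C ∧ C ⊆ ⋃₀ (𝒯 : Set (Set V)) := by
    intro C hC
    rcases Finset.mem_insert.mp hC with rfl | hC
    · exact ⟨⟨x, hwhite 𝒯 subset_rfl hne, rfl⟩, (hW₀x ▸ whiteComp_antitone hBB' x).trans
        (Set.subset_sUnion_of_mem (Finset.mem_coe.mpr hW₀))⟩
    · exact (h𝒞 C hC).imp_right fun h => h.trans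
        (Set.sUnion_mono (Finset.coe_subset.mpr (Finset.erase_subset _ _)))
  refine ⟨insert C₀ 𝒞, fun 𝒮 => if C₀ ∈ 𝒮 then 𝒯 else sel 𝒮, ?_, h𝒞', fun 𝒮 h𝒮 hne𝒮 => ?_⟩
  · rw [Finset.card_insert_of_notMem hC₀, hcard, Finset.card_erase_add_one hW₀]
  by_cases hC₀𝒮 : C₀ ∈ 𝒮
  · simp only [if_pos hC₀𝒮]
    exact ⟨subset_rfl, hne, (hforce 𝒯 subset_rfl hne).of_subset hBB' (hwhite 𝒯 subset_rfl hne)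
      ⟨C₀, hC₀𝒮, mem_whiteComp_self G B' x⟩
      (Set.sUnion_subset fun C hC => (h𝒞' C (h𝒮 hC)).2)⟩
  · simp only [if_neg hC₀𝒮]
    obtain ⟨hsub, hsel⟩ := hsel 𝒮 ((Finset.subset_insert_iff_of_notMem hC₀𝒮).mp h𝒮) hne𝒮
    exact ⟨hsub.trans (Finset.erase_subset _ _), hsel⟩

theorem Win.mono (h : Win G q B t) (hB : B ⊆ B') (ht : t ≤ t') : Win G q B' t' := by
  induction h generalizing B' t' with
  | all B t hall => exact .all B' t' fun x => hB (hall x)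
  | rule1 B t x _ ih =>
    by_cases hx : x ∈ B'
    · exact ih (Set.insert_subset hx hB) (by omega)
    · obtain ⟨s, rfl⟩ : ∃ s, t' = s + 1 := ⟨t' - 1, by omega⟩
      exact .rule1 B' s x (ih (Set.insert_subset_insert hB) (by omega))
  | rule2 B t a b hf _ ih =>
    by_cases hb : b ∈ B'
    · exact ih (Set.insert_subset hb hB) ht
    · exact .rule2 B' t' a b (hf.of_subset hB hb trivial subset_rfl)
        (ih (Set.insert_subset_insert hB) ht)
  | rule3 B t 𝒲 vf wf hcomp hcard hforce _ ih =>
    by_cases hblue : ∃ 𝒮 ⊆ 𝒲, 𝒮.Nonempty ∧ wf 𝒮 ∈ B'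
    · obtain ⟨𝒮, h𝒮, hne, hwf⟩ := hblue
      exact ih 𝒮 h𝒮 hne (Set.insert_subset hwf hB) ht
    push Not at hblue
    obtain ⟨𝒞, sel, hcard𝒞, h𝒞, hsel⟩ := exists_rule3_of_subset hB vf wf 𝒲 hcomp hforce hblue
    exact .rule3 B' t' 𝒞 (vf ∘ sel) (wf ∘ sel) (fun C hC => (h𝒞 C hC).1) (hcard𝒞 ▸ hcard)
      (fun 𝒮 h𝒮 hne => (hsel 𝒮 h𝒮 hne).2.2)
      (fun 𝒮 h𝒮 hne => ih (sel 𝒮) (hsel 𝒮 h𝒮 hne).1 (hsel 𝒮 h𝒮 hne).2.1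
        (Set.insert_subset_insert hB) ht)

lemma ForceIn.of_adj_iff (hGH : ∀ a b, b ∉ B → (G.Adj a b ↔ H.Adj a b)) {a b : V}
    (h : ForceIn G B U a b) : ForceIn H B U a b :=
  ⟨h.1, h.2.1, h.2.2.1, (hGH a b h.2.1).1 h.2.2.2.1,
    fun u hu huB huU => h.2.2.2.2 u ((hGH a u huB).2 hu) huB huU⟩

lemma whiteComp_eq_of_adj_iff (hGH : ∀ a b, b ∉ B → (G.Adj a b ↔ H.Adj a b)) (x : V) :
    WhiteComp G B x = WhiteComp H B x := by
  have hrel : (fun a b => G.Adj a b ∧ a ∉ B ∧ b ∉ B) = fun a b => H.Adj a b ∧ a ∉ B ∧ b ∉ B := by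
    ext a b
    exact and_congr_left fun h => hGH a b h.2
  simp only [WhiteComp, hrel]

theorem Win.of_adj_iff (h : Win G q B t) (hGH : ∀ a b, b ∉ B → (G.Adj a b ↔ H.Adj a b)) :
    Win H q B t := by
  have hins : ∀ {B : Set V} (x : V), (∀ a b, b ∉ B → (G.Adj a b ↔ H.Adj a b)) →
      ∀ a b, b ∉ insert x B → (G.Adj a b ↔ H.Adj a b) :=
    fun x hGH a b hb => hGH a b fun h => hb (Set.mem_insert_of_mem x h)
  induction h with
  | all B t hall => exact .all B t hall
  | rule1 B t x _ ih => exact .rule1 B t x (ih (hins x hGH))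
  | rule2 B t a b hf _ ih => exact .rule2 B t a b (hf.of_adj_iff hGH) (ih (hins b hGH))
  | rule3 B t 𝒲 vf wf hcomp hcard hforce _ ih =>
    refine .rule3 B t 𝒲 vf wf (fun W hW => ?_) hcard
      (fun 𝒮 h𝒮 hne => (hforce 𝒮 h𝒮 hne).of_adj_iff hGH)
      (fun 𝒮 h𝒮 hne => ih 𝒮 h𝒮 hne (hins _ hGH))
    obtain ⟨x, hx, rfl⟩ := hcomp W hW
    exact ⟨x, hx, whiteComp_eq_of_adj_iff hGH x⟩

lemma Win.add_two_of_adj_iff {v w : V}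
    (hGH : ∀ a b, b ≠ v → b ≠ w → (G.Adj a b ↔ H.Adj a b)) (h : Win G q ∅ t) :
    Win H q ∅ (t + 2) :=
  .rule1 _ _ v <| .rule1 _ _ w <| (h.mono (Set.empty_subset _) le_rfl).of_adj_iff
    fun a b hb => hGH a b (fun h => hb (by simp [h])) (fun h => hb (by simp [h]))

lemma zq_le_add_two_of_adj_iff (v w : V)
    (hGH : ∀ a b, b ≠ v → b ≠ w → (G.Adj a b ↔ H.Adj a b)) : Zq H q ≤ Zq G q + 2 := by
  rcases Set.eq_empty_or_nonempty {t | Win G q ∅ t} with hG | hG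
  · have hH : {t | Win H q ∅ t} = ∅ := Set.eq_empty_of_forall_notMem fun t ht =>
      hG.subset (Win.add_two_of_adj_iff (fun a b hv hw => (hGH a b hv hw).symm) ht)
    simp [Zq, cost, hH]
  · exact Nat.sInf_le (Win.add_two_of_adj_iff hGH (Nat.sInf_mem hG))

end ZqGame

theorem Zq_le_Zq_deleteEdge_add_two_general {V : Type*} (G : SimpleGraph V) (v w : V)
    (q : ℕ) :
    ZqGame.Zq G q ≤ ZqGame.Zq (G.deleteEdges {s(v, w)}) q + 2 :=
  ZqGame.zq_le_add_two_of_adj_iff v w fun a b hv hw => by simp [hv, hw]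

/-- Edge deletion can decrease `Z_q` by at most `2`:
for any edge `vw` of `G`, `Z_q(G) ≤ Z_q(G - vw) + 2`. -/
theorem Zq_le_Zq_deleteEdge_add_two {V : Type*} (G : SimpleGraph V) (v w : V)
    (he : G.Adj v w) (q : ℕ) :
    ZqGame.Zq G q ≤ ZqGame.Zq (G.deleteEdges {s(v, w)}) q + 2 :=
  Zq_le_Zq_deleteEdge_add_two_general G v w q
end

section
/- For the cycle corona $C_n \circ k K_1$ with $n \ge 3$ and $k \ge 1$: $\operatorname{Z}_1(C_n \circ kK_1) = k + 1$. -/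
open SimpleGraph

namespace ZqGame

/-- Vertex type of a caterpillar cycle: `Sum.inl i` is the `i`-th center (cycle) vertex,
and `Sum.inr ⟨i, j⟩` is the `j`-th pendant leaf attached to center `i`, where center `i`
has `f i` pendant leaves. -/
abbrev CatVert (n : ℕ) (f : Fin n → ℕ) : Type := Fin n ⊕ (Σ i : Fin n, Fin (f i))

/-- The caterpillar cycle obtained from the cycle `C_n` by attaching `f i` pendant
leaves to the `i`-th cycle vertex. -/
def catCycle (n : ℕ) (f : Fin n → ℕ) : SimpleGraph (CatVert n f) :=
  SimpleGraph.fromRel (fun x y =>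
    match x, y with
    | Sum.inl i, Sum.inl j => ((i : ℕ) + 1) % n = (j : ℕ)
    | Sum.inl i, Sum.inr l => i = l.1
    | _, _ => False)

end ZqGame

/-!
Upper bound: Blue buys two adjacent centers. While the white centers form an arc, Blue plays
Rule 3 on a white leaf of a blue center together with the white component containing the rest of
the cycle; whatever White returns, Blue colors a vertex for free, forcing the next cycle vertex
from an end of the blue arc. Once every center is blue, Rule 3 on leaves of two different centers
is free, and the leaves of the last center cost at most `k - 1` tokens.

Lower bound: the potential `max_i (#white leaves at i) - 1 + (2 - #touched centers)` is `k + 1` at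
the start and `0` at the end. A token lowers it by at most one, and free moves never lower it:
Rule 3 needs two touched centers, and White can always return components so that Blue does not
force from the center with the most white leaves.
-/

namespace ZqGame

open Fin.NatCast Fin.CommRing

section Game

variable {V : Type*} {G : SimpleGraph V} {B W W₁ W₂ : Set V} {q t : ℕ} {v w x y : V}

theorem mem_whiteComp_self_s12 : w ∈ WhiteComp G B w := Relation.ReflTransGen.refl

theorem mem_whiteComp_of_adj (hx : x ∈ WhiteComp G B w) (hxB : x ∉ B) (hxy : G.Adj x y)
    (hy : y ∉ B) : y ∈ WhiteComp G B w :=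
  Relation.ReflTransGen.tail hx ⟨hxy, hxB, hy⟩

theorem mem_whiteComp_trans (hx : x ∈ WhiteComp G B w) (hy : y ∈ WhiteComp G B x) :
    y ∈ WhiteComp G B w :=
  Relation.ReflTransGen.trans hx hy

theorem whiteComp_eq_of_mem (hx : x ∈ WhiteComp G B w) : WhiteComp G B x = WhiteComp G B w := by
  have hsymm : Relation.ReflTransGen (fun a b => G.Adj a b ∧ a ∉ B ∧ b ∉ B) x w :=
    Relation.ReflTransGen.mono (fun _ _ h => ⟨h.1.symm, h.2.2, h.2.1⟩) _ _
      (Relation.ReflTransGen.swap _ _ hx)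
  ext y
  exact ⟨hx.trans, hsymm.trans⟩

theorem whiteComp_eq_singleton (hw : ∀ u, G.Adj w u → u ∈ B) : WhiteComp G B w = {w} := by
  refine Set.Subset.antisymm (fun x hx => ?_) (by simpa using mem_whiteComp_self_s12)
  induction hx with
  | refl => rfl
  | tail _ h ih => exact absurd (hw _ (ih ▸ h.1)) h.2.2

theorem IsWhiteComp.eq_whiteComp (hW : IsWhiteComp G B W) (hx : x ∈ W) :
    W = WhiteComp G B x := by
  obtain ⟨w, -, rfl⟩ := hW
  exact (whiteComp_eq_of_mem hx).symm

theorem IsWhiteComp.eq_of_mem (h₁ : IsWhiteComp G B W₁) (h₂ : IsWhiteComp G B W₂)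
    (hx₁ : x ∈ W₁) (hx₂ : x ∈ W₂) : W₁ = W₂ :=
  (h₁.eq_whiteComp hx₁).trans (h₂.eq_whiteComp hx₂).symm

theorem isWhiteComp_singleton (hw : w ∉ B) (hnbr : ∀ u, G.Adj w u → u ∈ B) :
    IsWhiteComp G B {w} :=
  ⟨w, hw, (whiteComp_eq_singleton hnbr).symm⟩

theorem forceIn_singleton (hv : v ∈ B) (hw : w ∉ B) (hvw : G.Adj v w) :
    ForceIn G B {w} v w :=
  ⟨hv, hw, rfl, hvw, fun _ _ _ hu => hu⟩

theorem ForceIn.union (h : ForceIn G B W₁ v w) (hW₂ : ∀ u ∈ W₂, ¬ G.Adj v u) :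
    ForceIn G B (W₁ ∪ W₂) v w := by
  obtain ⟨hv, hw, hwW, hvw, huniq⟩ := h
  refine ⟨hv, hw, Or.inl hwW, hvw, fun u hvu hu huW => ?_⟩
  rcases huW with huW | huW
  · exact huniq u hvu hu huW
  · exact absurd hvu (hW₂ u huW)

theorem Win.rule3_pair (h₁ : IsWhiteComp G B W₁) (h₂ : IsWhiteComp G B W₂) (hne : W₁ ≠ W₂)
    {v₁ w₁ v₂ w₂ v₃ w₃ : V} (f₁ : ForceIn G B W₁ v₁ w₁) (f₂ : ForceIn G B W₂ v₂ w₂)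
    (f₃ : ForceIn G B (W₁ ∪ W₂) v₃ w₃) (g₁ : Win G 1 (insert w₁ B) t)
    (g₂ : Win G 1 (insert w₂ B) t) (g₃ : Win G 1 (insert w₃ B) t) : Win G 1 B t := by
  classical
  have hcases : ∀ 𝒮 ⊆ ({W₁, W₂} : Finset (Set V)), 𝒮.Nonempty →
      𝒮 = {W₁} ∨ 𝒮 = {W₂} ∨ 𝒮 = {W₁, W₂} := by
    intro 𝒮 h𝒮 hne𝒮
    rw [← Finset.mem_powerset] at h𝒮
    simp only [Finset.powerset_insert, Finset.mem_union, Finset.mem_powerset,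
      Finset.subset_singleton_iff, Finset.mem_image, exists_eq_or_imp, insert_empty_eq,
      ↓existsAndEq, true_and] at h𝒮
    rcases h𝒮 with (rfl | rfl) | rfl | rfl <;> simp_all
  have h₂₁ : ({W₂} : Finset (Set V)) ≠ {W₁} := by simpa using hne.symm
  have hp₁ : ({W₁, W₂} : Finset (Set V)) ≠ {W₁} := fun h => hne.symm <| by
    simpa using (h ▸ Finset.mem_insert_of_mem (Finset.mem_singleton_self W₂) :
      W₂ ∈ ({W₁} : Finset (Set V)))
  have hp₂ : ({W₁, W₂} : Finset (Set V)) ≠ {W₂} := by simp [hne]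
  refine Win.rule3 B t {W₁, W₂}
    (fun 𝒮 => if 𝒮 = {W₁} then v₁ else if 𝒮 = {W₂} then v₂ else v₃)
    (fun 𝒮 => if 𝒮 = {W₁} then w₁ else if 𝒮 = {W₂} then w₂ else w₃) ?_
    (by rw [Finset.card_pair hne]) ?_ ?_
  · simp only [Finset.mem_insert, Finset.mem_singleton]
    rintro W (rfl | rfl) <;> assumption
  all_goals
    intro 𝒮 h𝒮 hne𝒮
    rcases hcases 𝒮 h𝒮 hne𝒮 with rfl | rfl | rfl <;> simpa [h₂₁, hp₁, hp₂]

theorem exists_subset_forcer_ne (c : V) {𝒲 : Finset (Set V)} {vf wf : Finset (Set V) → V}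
    (h𝒲 : ∀ W ∈ 𝒲, IsWhiteComp G B W) (hcard : 2 ≤ 𝒲.card)
    (hforce : ∀ 𝒮 ⊆ 𝒲, 𝒮.Nonempty → ForceIn G B (⋃₀ (𝒮 : Set (Set V))) (vf 𝒮) (wf 𝒮)) :
    ∃ 𝒮 ⊆ 𝒲, 𝒮.Nonempty ∧ vf 𝒮 ≠ c := by
  classical
  obtain ⟨W₁, hW₁, W₂, hW₂, hne⟩ := Finset.one_lt_card.1 hcard
  have hsub : {W₁, W₂} ⊆ 𝒲 := Finset.insert_subset hW₁ (Finset.singleton_subset_iff.2 hW₂)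
  by_cases hc : vf {W₁, W₂} = c
  swap
  · exact ⟨_, hsub, Finset.insert_nonempty _ _, hc⟩
  obtain ⟨-, -, hwW, -, huniq⟩ := hforce _ hsub (Finset.insert_nonempty _ _)
  simp only [Finset.coe_pair, Set.sUnion_pair, hc] at hwW huniq
  -- If `c` forces on `W₁ ∪ W₂`, White returns only the component missing the forced vertex.
  obtain ⟨W, hW, hwW'⟩ : ∃ W ∈ 𝒲, (W = W₁ ∨ W = W₂) ∧ wf {W₁, W₂} ∉ W := by
    by_cases h : wf {W₁, W₂} ∈ W₁
    · exact ⟨W₂, hW₂, Or.inr rfl, fun h' => hne ((h𝒲 _ hW₁).eq_of_mem (h𝒲 _ hW₂) h h')⟩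
    · exact ⟨W₁, hW₁, Or.inl rfl, h⟩
  obtain ⟨-, hw, hwS, hadj, -⟩ := hforce {W} (Finset.singleton_subset_iff.2 hW)
    (Finset.singleton_nonempty W)
  simp only [Finset.coe_singleton, Set.sUnion_singleton] at hw hwS hadj
  refine ⟨{W}, Finset.singleton_subset_iff.2 hW, Finset.singleton_nonempty W, fun hvc => ?_⟩
  rw [hvc] at hadj
  have := huniq _ hadj hw (by rcases hwW'.1 with rfl | rfl <;> simp [hwS])
  exact hwW'.2 (this ▸ hwS)

theorem Win.le_of_potential (φ : Set V → ℕ) (h_univ : φ Set.univ = 0)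
    (h_rule1 : ∀ B v, φ B ≤ φ (insert v B) + 1)
    (h_rule2 : ∀ B v w, Force G B v w → φ B ≤ φ (insert w B))
    (h_rule3 : ∀ B (𝒲 : Finset (Set V)) (vf wf : Finset (Set V) → V),
      (∀ W ∈ 𝒲, IsWhiteComp G B W) → q + 1 ≤ 𝒲.card →
      (∀ 𝒮 ⊆ 𝒲, 𝒮.Nonempty → ForceIn G B (⋃₀ (𝒮 : Set (Set V))) (vf 𝒮) (wf 𝒮)) →
      ∃ 𝒮 ⊆ 𝒲, 𝒮.Nonempty ∧ φ B ≤ φ (insert (wf 𝒮) B))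
    (h : Win G q B t) : φ B ≤ t := by
  induction h with
  | all B t hB => simp [Set.eq_univ_of_forall hB, h_univ]
  | rule1 B t v _ ih => exact (h_rule1 B v).trans (by omega)
  | rule2 B t v w hf _ ih => exact (h_rule2 B v w hf).trans ih
  | rule3 B t 𝒲 vf wf hW hcard hforce _ ih =>
    obtain ⟨𝒮, h𝒮, hne, hφ⟩ := h_rule3 B 𝒲 vf wf hW hcard hforce
    exact hφ.trans (ih 𝒮 h𝒮 hne)

theorem win_of_compl_subsingleton (hv : v ∈ B) (hB : Bᶜ ⊆ G.neighborSet v)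
    (h : Bᶜ.Subsingleton) : Win G q B t := by
  rcases h.eq_empty_or_singleton with h | ⟨w, hw⟩
  · exact Win.all B t fun u => by simpa using Set.ext_iff.1 h u
  have hwB : w ∉ B := (Set.ext_iff.1 hw w).2 rfl
  refine Win.rule2 B t v w ⟨hv, hwB, trivial, hB (by simp [hw]), fun u _ hu _ => ?_⟩ ?_
  · simpa [hw] using (show u ∈ Bᶜ from hu)
  · refine Win.all _ t fun u => ?_
    by_cases hu : u ∈ B
    · exact Set.mem_insert_of_mem _ hu
    · simp [show u = w by simpa [hw] using (show u ∈ Bᶜ from hu)]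

theorem win_of_compl_subset_neighborSet [Finite V] (hv : v ∈ B)
    (hB : Bᶜ ⊆ G.neighborSet v) (ht : Bᶜ.ncard ≤ t + 1) : Win G q B t := by
  induction t generalizing B with
  | zero => exact win_of_compl_subsingleton hv hB (Set.ncard_le_one_iff_subsingleton.1 ht)
  | succ t ih =>
    by_cases h : Bᶜ.Subsingleton
    · exact win_of_compl_subsingleton hv hB h
    obtain ⟨w, hw⟩ := (Set.not_subsingleton_iff.1 h).nonempty
    have hcompl : (insert w B)ᶜ = Bᶜ \ {w} := by
      ext; simp [not_or, and_comm]
    refine Win.rule1 B t w (ih (Set.mem_insert_of_mem _ hv) ?_ ?_)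
    · exact hcompl ▸ Set.sdiff_subset.trans hB
    · rw [hcompl, Set.ncard_sdiff_singleton_of_mem hw]
      omega

end Game

section Arc

variable {n : ℕ} [NeZero n] {a b r s : ℕ} {c i : Fin n}

theorem natCast_inj_of_lt (ha : a < n) (hb : b < n) : (a : Fin n) = b ↔ a = b := by
  refine ⟨fun h => ?_, congrArg _⟩
  simpa [Fin.ext_iff, Nat.mod_eq_of_lt ha, Nat.mod_eq_of_lt hb] using h

def InArc (c : Fin n) (r : ℕ) (i : Fin n) : Prop := ∃ s < r, c + s = i

theorem inArc_add_natCast_iff (hs : s < n) (hr : r ≤ n) : InArc c r (c + s) ↔ s < r := by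
  refine ⟨fun ⟨s', hs', h⟩ => ?_, fun h => ⟨s, h, rfl⟩⟩
  rw [add_right_inj, natCast_inj_of_lt (by omega) hs] at h
  omega

theorem not_inArc_add_natCast (hrs : r ≤ s) (hs : s < n) : ¬ InArc c r (c + s) := by
  rw [inArc_add_natCast_iff hs (by omega)]
  omega

theorem inArc_of_le (h : n ≤ r) : InArc c r i :=
  ⟨(i - c : Fin n), by omega, by simp⟩

theorem inArc_add_one_iff (hr : r < n) : InArc (c + 1) r i ↔ InArc c (r + 1) i ∧ i ≠ c := by
  constructor
  · rintro ⟨s, hs, rfl⟩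
    refine ⟨⟨s + 1, by omega, by push_cast; ring⟩, fun h => ?_⟩
    rw [add_assoc, add_eq_left, ← Nat.cast_one, ← Nat.cast_add, Fin.natCast_eq_zero] at h
    exact absurd (Nat.le_of_dvd (by omega) h) (by omega)
  · rintro ⟨⟨_ | s, hs, rfl⟩, hne⟩
    · simp at hne
    · exact ⟨s, by omega, by push_cast; ring⟩

theorem inArc_iff_succ_and_ne (hr : r < n) : InArc c r i ↔ InArc c (r + 1) i ∧ i ≠ c + r := by
  constructor
  · rintro ⟨s, hs, rfl⟩
    refine ⟨⟨s, by omega, rfl⟩, fun h => ?_⟩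
    rw [add_right_inj, natCast_inj_of_lt (by omega) (by omega)] at h
    omega
  · rintro ⟨⟨s, hs, rfl⟩, hne⟩
    refine ⟨s, ?_, rfl⟩
    rcases Nat.lt_succ_iff_lt_or_eq.1 hs with hs | rfl
    · exact hs
    · exact absurd rfl hne

theorem InArc.sub_one (h : InArc c r i) : InArc (c - 1) (r + 1) i := by
  obtain ⟨s, hs, rfl⟩ := h
  exact ⟨s + 1, by omega, by push_cast; ring⟩

theorem not_inArc_sub_one (hr : r < n) : ¬ InArc c r (c - 1) := by
  have h := inArc_add_one_iff (c := c - 1) (i := c - 1) hr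
  rw [sub_add_cancel] at h
  exact fun hc => h.1 hc |>.2 rfl

theorem not_inArc_sub_one_sub_one (hr : r + 1 < n) : ¬ InArc c r (c - 1 - 1) :=
  fun h => not_inArc_sub_one hr h.sub_one

end Arc

section CatCycle

variable {n : ℕ} {f : Fin n → ℕ}

abbrev center (i : Fin n) : CatVert n f := .inl i

abbrev leaf (i : Fin n) (j : Fin (f i)) : CatVert n f := .inr ⟨i, j⟩

def index : CatVert n f → Fin n
  | .inl i => i
  | .inr l => l.1

variable {i : Fin n} {j : Fin (f i)} {u : CatVert n f}

theorem catCycle_adj_center_leaf (i : Fin n) (j : Fin (f i)) :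
    (catCycle n f).Adj (center i) (leaf i j) := by
  simp [catCycle]

theorem catCycle_adj_leaf_iff : (catCycle n f).Adj (leaf i j) u ↔ u = center i := by
  rcases u with i' | ⟨i', j'⟩ <;> simp [catCycle, eq_comm]

variable [NeZero n]

theorem add_one_ne_self (hn : 2 ≤ n) (i : Fin n) : i + 1 ≠ i := by
  rw [Ne, add_eq_left, ← Nat.cast_one, Fin.natCast_eq_zero]
  exact fun h => absurd (Nat.le_of_dvd one_pos h) (by omega)

theorem sub_one_ne_self (hn : 2 ≤ n) (i : Fin n) : i - 1 ≠ i :=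
  fun h => add_one_ne_self hn (i - 1) (by rw [sub_add_cancel]; exact h.symm)

theorem add_one_ne_sub_one (hn : 3 ≤ n) (i : Fin n) : i + 1 ≠ i - 1 := by
  rw [Ne, ← sub_eq_zero, show i + 1 - (i - 1) = ((2 : ℕ) : Fin n) by push_cast; ring,
    Fin.natCast_eq_zero]
  exact fun h => absurd (Nat.le_of_dvd two_pos h) (by omega)

theorem val_add_one_mod (i : Fin n) : ((i : ℕ) + 1) % n = ((i + 1 : Fin n) : ℕ) := by
  simp [Fin.val_add]

theorem catCycle_adj_center_add_one (hn : 2 ≤ n) (i : Fin n) :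
    (catCycle n f).Adj (center i) (center (i + 1)) := by
  simp [catCycle, val_add_one_mod, (add_one_ne_self hn i).symm]

theorem catCycle_adj_center_iff (hn : 2 ≤ n) :
    (catCycle n f).Adj (center i) u ↔
      u = center (i + 1) ∨ u = center (i - 1) ∨ ∃ j, u = leaf i j := by
  refine ⟨fun h => ?_, ?_⟩
  · rcases u with i' | ⟨i', j'⟩
    · simp only [catCycle, fromRel_adj, val_add_one_mod, Fin.val_inj] at h
      rcases h.2 with rfl | rfl
      · exact .inl rfl
      · exact .inr (.inl (by simp))
    · simp only [catCycle, fromRel_adj] at h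
      obtain rfl := h.2.resolve_right id
      exact .inr (.inr ⟨j', rfl⟩)
  · rintro (rfl | rfl | ⟨j, rfl⟩)
    · exact catCycle_adj_center_add_one hn i
    · simpa using (catCycle_adj_center_add_one (f := f) hn (i - 1)).symm
    · exact catCycle_adj_center_leaf i j

end CatCycle

section CatCycleForcing

variable {n : ℕ} {f : Fin n → ℕ} {B W : Set (CatVert n f)} {c i x : Fin n} {j : Fin (f i)} {r : ℕ}

theorem isWhiteComp_leaf (hc : center i ∈ B) (hl : leaf i j ∉ B) :
    IsWhiteComp (catCycle n f) B {leaf i j} :=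
  isWhiteComp_singleton hl fun _ hu => catCycle_adj_leaf_iff.1 hu ▸ hc

theorem forceIn_leaf (hc : center i ∈ B) (hl : leaf i j ∉ B) :
    ForceIn (catCycle n f) B {leaf i j} (center i) (leaf i j) :=
  forceIn_singleton hc hl (catCycle_adj_center_leaf i j)

theorem leaf_notMem_whiteComp_center (hi : center i ∈ B) :
    leaf i j ∉ WhiteComp (catCycle n f) B (center c) := fun hl => by
  have hcl := (whiteComp_eq_of_mem hl).symm ▸ (mem_whiteComp_self_s12 (G := catCycle n f) (B := B))
  rw [whiteComp_eq_singleton fun _ hu => catCycle_adj_leaf_iff.1 hu ▸ hi] at hcl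
  simp at hcl

variable [NeZero n]

theorem center_mem_whiteComp_of_inArc (hn : 2 ≤ n)
    (hwhite : ∀ i, InArc c r i → center i ∉ B) (hi : InArc c r i) :
    center i ∈ WhiteComp (catCycle n f) B (center c) := by
  obtain ⟨s, hs, rfl⟩ := hi
  induction s with
  | zero => simpa using mem_whiteComp_self_s12
  | succ s ih =>
    refine mem_whiteComp_of_adj (ih (by omega)) (hwhite _ ⟨s, by omega, rfl⟩) ?_
      (hwhite _ ⟨s + 1, hs, rfl⟩)
    simpa [add_assoc] using catCycle_adj_center_add_one (f := f) hn (c + s)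

theorem forceIn_center_of_sub_one (hn : 2 ≤ n) (hx : center (x - 1) ∈ B)
    (hx' : center (x - 1 - 1) ∈ B) (hxB : center x ∉ B) (hxW : center x ∈ W)
    (hleaf : ∀ j, leaf (x - 1) j ∈ W → leaf (x - 1) j ∈ B) :
    ForceIn (catCycle n f) B W (center (x - 1)) (center x) := by
  have hadj := catCycle_adj_center_add_one (f := f) hn (x - 1)
  rw [sub_add_cancel] at hadj
  refine ⟨hx, hxB, hxW, hadj, fun u hu huB huW => ?_⟩
  rcases (catCycle_adj_center_iff hn).1 hu with rfl | rfl | ⟨j, rfl⟩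
  · simp
  · exact absurd hx' huB
  · exact absurd (hleaf j huW) huB

theorem forceIn_center_of_add_one (hn : 2 ≤ n) (hx : center (x + 1) ∈ B)
    (hx' : center (x + 1 + 1) ∈ B) (hxB : center x ∉ B) (hxW : center x ∈ W)
    (hleaf : ∀ j, leaf (x + 1) j ∈ W → leaf (x + 1) j ∈ B) :
    ForceIn (catCycle n f) B W (center (x + 1)) (center x) := by
  refine ⟨hx, hxB, hxW, (catCycle_adj_center_add_one hn x).symm, fun u hu huB huW => ?_⟩
  rcases (catCycle_adj_center_iff hn).1 hu with rfl | rfl | ⟨j, rfl⟩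
  · exact absurd hx' huB
  · simp
  · exact absurd (hleaf j huW) huB

end CatCycleForcing

section UpperBound

variable {n k : ℕ} [NeZero n]

local notation "Γ" => catCycle n fun _ => k

theorem win_of_forall_center_mem (hk : 1 ≤ k)
    (B : Set (CatVert n fun _ => k)) (hB : ∀ i, center i ∈ B) : Win Γ 1 B (k - 1) := by
  induction B using WellFoundedGT.induction with
  | _ B ih =>
  have ih' : ∀ w ∉ B, Win Γ 1 (insert w B) (k - 1) := fun w hw =>
    ih _ (Set.ssubset_insert hw) fun i => Set.mem_insert_of_mem _ (hB i)
  by_cases h2 : ∃ p q : Fin n, ∃ j j' : Fin k, p ≠ q ∧ leaf p j ∉ B ∧ leaf q j' ∉ B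
  · obtain ⟨p, q, j, j', hpq, hp, hq⟩ := h2
    refine Win.rule3_pair (isWhiteComp_leaf (hB p) hp) (isWhiteComp_leaf (hB q) hq)
      (by simp [hpq]) (forceIn_leaf (hB p) hp) (forceIn_leaf (hB q) hq)
      ((forceIn_leaf (hB p) hp).union ?_) (ih' _ hp) (ih' _ hq) (ih' _ hp)
    rintro _ rfl hadj
    exact hpq (by simpa using catCycle_adj_leaf_iff.1 hadj.symm)
  push Not at h2
  obtain ⟨p, hp⟩ : ∃ p, Bᶜ ⊆ Set.range (leaf p) := by
    rcases Bᶜ.eq_empty_or_nonempty with h | ⟨_ | ⟨p, j⟩, hv⟩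
    · exact ⟨0, by simp [h]⟩
    · exact absurd (hB _) hv
    refine ⟨p, fun w hw => ?_⟩
    rcases w with i | ⟨q, j'⟩
    · exact absurd (hB i) hw
    obtain rfl : q = p := by_contra fun hqp => hw (h2 p q j j' (Ne.symm hqp) hv)
    exact ⟨j', rfl⟩
  refine win_of_compl_subset_neighborSet (hB p) (hp.trans ?_) ?_
  · rintro _ ⟨j, rfl⟩
    exact catCycle_adj_center_leaf (f := fun _ => k) p j
  · calc Bᶜ.ncard ≤ (Set.range (leaf (f := fun _ => k) p)).ncard := Set.ncard_le_ncard hp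
      _ ≤ k := by
        simpa using Set.ncard_image_le (f := leaf (f := fun _ => k) p) (s := Set.univ)
      _ = k - 1 + 1 := by omega

variable {B : Set (CatVert n fun _ => k)} {c : Fin n} {r t : ℕ}

theorem win_of_inArc_step (hn : 3 ≤ n) (hr : r + 3 ≤ n)
    (hB : ∀ i, center i ∉ B ↔ InArc c (r + 1) i)
    (g_first : Win Γ 1 (insert (center c) B) t)
    (g_last : Win Γ 1 (insert (center (c + (r : Fin n))) B) t)
    (g_leaf : ∀ p j, leaf p j ∉ B → Win Γ 1 (insert (leaf p j) B) t) : Win Γ 1 B t := by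
  have hblue : ∀ i, ¬ InArc c (r + 1) i → center i ∈ B := fun i h => by_contra (h ∘ (hB i).1)
  have hblue_add : ∀ s, r + 1 ≤ s → s < n → center (c + (s : Fin n)) ∈ B :=
    fun s hrs hs => hblue _ (not_inArc_add_natCast hrs hs)
  have hc : center c ∉ B := (hB c).2 ⟨0, by omega, by simp⟩
  -- the blue arc runs from `c + r + 1` to `c - 1`
  have hb := hblue _ (not_inArc_sub_one (by omega))
  have hb' := hblue _ (not_inArc_sub_one_sub_one (by omega))
  have ha : center (c + (r : Fin n) + 1) ∈ B := by
    simpa [add_assoc] using hblue_add (r + 1) le_rfl (by omega)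
  have ha' : center (c + (r : Fin n) + 1 + 1) ∈ B := by
    simpa [add_assoc, one_add_one_eq_two] using hblue_add (r + 2) (by omega) (by omega)
  set W := WhiteComp Γ B (center c)
  have f_first : ForceIn Γ B W (center (c - 1)) (center c) :=
    forceIn_center_of_sub_one (by omega) hb (by simpa using hb') hc mem_whiteComp_self_s12
      fun j hj => absurd hj (leaf_notMem_whiteComp_center hb)
  have f_last : ForceIn Γ B W (center (c + (r : Fin n) + 1)) (center (c + (r : Fin n))) :=
    forceIn_center_of_add_one (by omega) ha ha' ((hB _).2 ⟨r, by omega, rfl⟩)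
      (center_mem_whiteComp_of_inArc (by omega) (fun i => (hB i).2) ⟨r, by omega, rfl⟩)
      fun j hj => absurd hj (leaf_notMem_whiteComp_center ha)
  by_cases hwl : ∃ p j, center p ∈ B ∧ leaf p j ∉ B
  swap
  · push Not at hwl
    exact Win.rule2 B _ _ _ (forceIn_center_of_sub_one (by omega) hb (by simpa using hb') hc
      trivial fun j _ => hwl _ j hb) g_first
  obtain ⟨p, j, hp, hl⟩ := hwl
  have hnadj : ∀ x, x ≠ p → ∀ u ∈ ({leaf p j} : Set (CatVert n fun _ => k)),
      ¬ (Γ).Adj (center x) u := by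
    rintro x hxp _ rfl hadj
    exact hxp (by simpa using catCycle_adj_leaf_iff.1 hadj.symm)
  -- If White returns both components, Blue forces from an end of the blue arc other than `p`.
  obtain ⟨x, y, f_both, g_both⟩ : ∃ x y, ForceIn Γ B (W ∪ {leaf p j}) x y ∧
      Win Γ 1 (insert y B) t := by
    by_cases hpb : p = c - 1
    · refine ⟨_, _, f_last.union (hnadj _ fun h => hc ?_), g_last⟩
      rwa [h, hpb, sub_add_cancel] at ha'
    · exact ⟨_, _, f_first.union (hnadj _ (Ne.symm hpb)), g_first⟩
  exact Win.rule3_pair ⟨center c, hc, rfl⟩ (isWhiteComp_leaf hp hl)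
    (fun h => by simpa [h] using (mem_whiteComp_self_s12 : center c ∈ W)) f_first
    (forceIn_leaf hp hl) f_both g_first (g_leaf p j hl) g_both

theorem win_of_inArc (hn : 3 ≤ n) (hk : 1 ≤ k) (B : Set (CatVert n fun _ => k)) (c : Fin n)
    (r : ℕ) (hr : r + 2 ≤ n) (hB : ∀ i, center i ∉ B ↔ InArc c r i) : Win Γ 1 B (k - 1) := by
  induction B using WellFoundedGT.induction generalizing c r with
  | _ B ih =>
  obtain _ | r := r
  · exact win_of_forall_center_mem hk B fun i => by simpa [InArc] using hB i
  refine win_of_inArc_step hn hr hB ?_ ?_ fun p j hl => ?_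
  · refine ih _ (Set.ssubset_insert ((hB c).2 ⟨0, by omega, by simp⟩)) (c + 1) r (by omega)
      fun i => ?_
    rw [inArc_add_one_iff (by omega), ← hB]
    simp [and_comm]
  · refine ih _ (Set.ssubset_insert ((hB _).2 ⟨r, by omega, rfl⟩)) c r (by omega) fun i => ?_
    rw [inArc_iff_succ_and_ne (by omega), ← hB]
    simp [and_comm]
  · exact ih _ (Set.ssubset_insert hl) c (r + 1) hr fun i => by simp [hB]

theorem win_empty (hn : 3 ≤ n) (hk : 1 ≤ k) : Win Γ 1 ∅ (k + 1) := by
  have hinit : ∀ i, center i ∉ ({center 1, center 0} : Set (CatVert n fun _ => k)) ↔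
      InArc (1 + 1) (n - 2) i := fun i => by
    have h₁ := inArc_add_one_iff (c := 0 + 1) (r := n - 2) (i := i) (by omega)
    have h₀ := inArc_add_one_iff (c := 0) (r := n - 2 + 1) (i := i) (by omega)
    simp only [zero_add] at h₁ h₀
    simp [h₁, h₀, inArc_of_le (show n ≤ n - 2 + 1 + 1 by omega), and_comm]
  have h := Win.rule1 _ _ _ (win_of_inArc hn hk _ _ _ (by omega) hinit)
  rw [Nat.sub_add_cancel hk] at h
  exact Win.rule1 ∅ k (center 0) (by simpa using h)

end UpperBound

section LowerBound

variable {n k : ℕ} {B : Set (CatVert n fun _ => k)} {v w : CatVert n fun _ => k}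
  {i x : Fin n}

local notation "Γ" => catCycle n fun _ => k

noncomputable def whiteLeafCount (B : Set (CatVert n fun _ => k)) (i : Fin n) : ℕ :=
  {j : Fin k | leaf i j ∉ B}.ncard

/-- The tokens Blue still has to spend: all but one white leaf at the fullest center, plus
touching two centers. -/
noncomputable def potential (B : Set (CatVert n fun _ => k)) : ℕ :=
  Finset.univ.sup (whiteLeafCount B) - 1 + (2 - (index '' B).ncard)

theorem whiteLeafCount_le (B : Set (CatVert n fun _ => k)) (i : Fin n) :
    whiteLeafCount B i ≤ k :=
  (Set.ncard_le_card _).trans (by simp)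

theorem whiteLeafCount_insert_of_ne (h : ∀ j, v ≠ leaf i j) :
    whiteLeafCount (insert v B) i = whiteLeafCount B i := by
  simp [whiteLeafCount, fun j => (h j).symm]

theorem whiteLeafCount_le_insert_add_one (B : Set (CatVert n fun _ => k)) (v) (i : Fin n) :
    whiteLeafCount B i ≤ whiteLeafCount (insert v B) i + 1 := by
  by_cases hv : ∃ j, v = leaf i j
  · obtain ⟨j, rfl⟩ := hv
    refine (Set.ncard_le_ncard fun j' hj' => ?_).trans (Set.ncard_insert_le j _)
    by_cases hj : j' = j
    · exact .inl hj
    · exact .inr fun h => hj' (h.resolve_left (by simpa using hj))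
  · rw [whiteLeafCount_insert_of_ne (not_exists.1 hv)]
    omega

theorem whiteLeafCount_of_notMem_image (h : i ∉ index '' B) : whiteLeafCount B i = k := by
  have : {j : Fin k | leaf i j ∉ B} = Set.univ :=
    Set.eq_univ_of_forall fun j hj => h ⟨_, hj, rfl⟩
  simp [whiteLeafCount, this]

theorem two_le_ncard_image_index (hxy : x ≠ i) (hx : x ∈ index '' B) (hi : i ∈ index '' B) :
    2 ≤ (index '' B).ncard :=
  (Set.ncard_pair hxy).symm.le.trans
    (Set.ncard_le_ncard (Set.insert_subset hx (Set.singleton_subset_iff.2 hi)))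

theorem whiteLeafCount_sub_one_le_of_force (h : Force Γ B v w) (i : Fin n) :
    whiteLeafCount B i - 1 ≤ whiteLeafCount (insert w B) i - 1 := by
  by_cases hw : ∃ j, w = leaf i j
  · obtain ⟨j, rfl⟩ := hw
    obtain ⟨-, -, -, hvw, huniq⟩ := h
    obtain rfl := catCycle_adj_leaf_iff.1 hvw.symm
    have : whiteLeafCount B i ≤ 1 := by
      refine (Set.ncard_le_ncard fun j' hj' => ?_).trans (Set.ncard_singleton j).le
      simpa using huniq (leaf i j') (catCycle_adj_center_leaf (f := fun _ => k) i j') hj' trivial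
    omega
  · rw [whiteLeafCount_insert_of_ne (not_exists.1 hw)]

theorem potential_univ (hn : 2 ≤ n) : potential (Set.univ : Set (CatVert n fun _ => k)) = 0 := by
  have himage : index '' (Set.univ : Set (CatVert n fun _ => k)) = Set.univ :=
    Set.image_univ_of_surjective fun i => ⟨center i, rfl⟩
  have hsup : Finset.univ.sup (whiteLeafCount (Set.univ : Set (CatVert n fun _ => k))) = 0 := by
    simp [whiteLeafCount]
  simp only [potential, hsup, himage, Set.ncard_univ, Nat.card_eq_fintype_card, Fintype.card_fin]
  omega

theorem potential_le_insert_add_one (hn : 3 ≤ n) (B : Set (CatVert n fun _ => k)) (v) :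
    potential B ≤ potential (insert v B) + 1 := by
  have hM : Finset.univ.sup (whiteLeafCount B) ≤
      Finset.univ.sup (whiteLeafCount (insert v B)) + 1 :=
    Finset.sup_le fun i _ => (whiteLeafCount_le_insert_add_one B v i).trans
      (Nat.add_le_add_right (Finset.le_sup (Finset.mem_univ i)) 1)
  have hT : (index '' insert v B).ncard ≤ (index '' B).ncard + 1 := by
    rw [Set.image_insert_eq]
    exact Set.ncard_insert_le _ _
  unfold potential
  by_cases h2 : 2 ≤ (index '' B).ncard
  · omega
  -- Some center stays untouched, so the maximum of the white leaf counts is still `k`.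
  obtain ⟨i, hi⟩ : ∃ i, i ∉ index '' insert v B := by
    by_contra! h
    rw [Set.eq_univ_of_forall h, Set.ncard_univ, Nat.card_eq_fintype_card, Fintype.card_fin]
      at hT
    omega
  have hk : k ≤ Finset.univ.sup (whiteLeafCount (insert v B)) :=
    (whiteLeafCount_of_notMem_image hi).symm.le.trans (Finset.le_sup (Finset.mem_univ i))
  have hMk : Finset.univ.sup (whiteLeafCount B) ≤ k :=
    Finset.sup_le fun i _ => whiteLeafCount_le B i
  omega

variable [NeZero n]

theorem two_le_ncard_image_index_of_force_center (hn : 3 ≤ n) (h : Force Γ B (center x) w) :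
    2 ≤ (index '' B).ncard := by
  obtain ⟨hx, -, -, -, huniq⟩ := h
  have hnext := catCycle_adj_center_add_one (f := fun _ => k) (by omega) x
  have hprev := (catCycle_adj_center_iff (f := fun _ => k) (i := x) (by omega)).2 (.inr (.inl rfl))
  obtain ⟨y, hyx, hy⟩ : ∃ y ≠ x, center y ∈ B := by
    by_contra! hwhite
    have h₁ := huniq _ hnext (hwhite _ (add_one_ne_self (by omega) x)) trivial
    have h₂ := huniq _ hprev (hwhite _ (sub_one_ne_self (by omega) x)) trivial
    exact add_one_ne_sub_one hn x (by simpa using h₁.trans h₂.symm)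
  exact two_le_ncard_image_index hyx.symm ⟨_, hx, rfl⟩ ⟨_, hy, rfl⟩

theorem ncard_image_index_insert_of_force (hn : 3 ≤ n) (h : Force Γ B v w) :
    (index '' insert w B).ncard = (index '' B).ncard ∨ 2 ≤ (index '' B).ncard := by
  rcases v with x | ⟨i, j⟩
  · exact .inr (two_le_ncard_image_index_of_force_center hn h)
  · obtain ⟨hv, -, -, hvw, -⟩ := h
    obtain rfl := catCycle_adj_leaf_iff.1 hvw
    left
    have hi : index (center (f := fun _ => k) i) ∈ index '' B := ⟨_, hv, rfl⟩
    rw [Set.image_insert_eq, Set.insert_eq_of_mem hi]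

theorem exists_adj_center_mem_whiteComp (hn : 2 ≤ n) {i₀ : Fin n} (hB : ∀ y ∈ B, index y = i₀)
    (hv : v ∉ B) : ∃ u ∈ WhiteComp Γ B v, u ∉ B ∧ (Γ).Adj (center i₀) u := by
  have hwhite : ∀ i, i ≠ i₀ → center i ∉ B := fun i hi h => hi (hB _ h)
  have hprev : center (i₀ - 1) ∉ B := hwhite _ (sub_one_ne_self hn i₀)
  have hadj := (catCycle_adj_center_iff (f := fun _ => k) (i := i₀) hn).2 (.inr (.inl rfl))
  -- the white centers `i₀ + 1, …, i₀ - 1` form an arc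
  have harc : ∀ i, i ≠ i₀ → center (i₀ - 1) ∈ WhiteComp Γ B (center i) := fun i hi => by
    have hmem : ∀ i, i ≠ i₀ → center i ∈ WhiteComp Γ B (center (i₀ + 1)) := fun i hi =>
      center_mem_whiteComp_of_inArc hn
        (fun i h => hwhite i ((inArc_add_one_iff (r := n - 1) (by omega)).1 h).2)
        ((inArc_add_one_iff (by omega)).2 ⟨inArc_of_le (by omega), hi⟩)
    rw [whiteComp_eq_of_mem (hmem i hi)]
    exact hmem _ (sub_one_ne_self hn i₀)
  rcases v with i | ⟨i, j⟩
  · by_cases hi : i = i₀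
    · subst hi
      exact ⟨_, mem_whiteComp_of_adj mem_whiteComp_self_s12 hv hadj hprev, hprev, hadj⟩
    · exact ⟨_, harc i hi, hprev, hadj⟩
  · by_cases hi : i = i₀
    · subst hi
      exact ⟨_, mem_whiteComp_self_s12, hv, catCycle_adj_center_leaf (f := fun _ => k) i j⟩
    · have hc := mem_whiteComp_of_adj mem_whiteComp_self_s12 hv
        (catCycle_adj_center_leaf (f := fun _ => k) i j).symm (hwhite i hi)
      exact ⟨_, mem_whiteComp_trans hc (harc i hi), hprev, hadj⟩

theorem two_le_ncard_image_index_of_forceIn_union (hn : 2 ≤ n) {W₁ W₂ : Set (CatVert n fun _ => k)}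
    (h₁ : IsWhiteComp Γ B W₁) (h₂ : IsWhiteComp Γ B W₂) (hne : W₁ ≠ W₂)
    (h : ForceIn Γ B (W₁ ∪ W₂) v w) : 2 ≤ (index '' B).ncard := by
  obtain ⟨hv, hw, -, hvw, huniq⟩ := h
  by_contra! hlt
  have hB : ∀ y ∈ B, index y = index v := fun y hy =>
    (Set.ncard_le_one_iff (Set.toFinite _)).1 (by omega : (index '' B).ncard ≤ 1)
      ⟨_, hy, rfl⟩ ⟨_, hv, rfl⟩
  obtain ⟨x₁, hx₁, rfl⟩ := h₁
  obtain ⟨x₂, hx₂, rfl⟩ := h₂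
  obtain ⟨u₁, hu₁, hu₁B, hadj₁⟩ := exists_adj_center_mem_whiteComp hn hB hx₁
  obtain ⟨u₂, hu₂, hu₂B, hadj₂⟩ := exists_adj_center_mem_whiteComp hn hB hx₂
  by_cases hc : center (index v) ∈ B
  · -- a blue leaf has no white neighbor, so `v` is the center itself
    have hvc : v = center (index v) := by
      rcases v with _ | ⟨i, j⟩
      · rfl
      · exact absurd (catCycle_adj_leaf_iff.1 hvw ▸ hc) hw
    rw [← hvc] at hadj₁ hadj₂
    have := (huniq _ hadj₁ hu₁B (.inl hu₁)).trans (huniq _ hadj₂ hu₂B (.inr hu₂)).symm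
    exact hne (IsWhiteComp.eq_of_mem ⟨x₁, hx₁, rfl⟩ ⟨x₂, hx₂, rfl⟩ hu₁ (this ▸ hu₂))
  · exact hne (IsWhiteComp.eq_of_mem ⟨x₁, hx₁, rfl⟩ ⟨x₂, hx₂, rfl⟩
      (mem_whiteComp_of_adj hu₁ hu₁B hadj₁.symm hc) (mem_whiteComp_of_adj hu₂ hu₂B hadj₂.symm hc))

theorem potential_empty (hk : 1 ≤ k) : potential (∅ : Set (CatVert n fun _ => k)) = k + 1 := by
  have : whiteLeafCount (∅ : Set (CatVert n fun _ => k)) = fun _ => k := by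
    ext i
    simp [whiteLeafCount]
  simp only [potential, this, Finset.sup_const Finset.univ_nonempty, Set.image_empty,
    Set.ncard_empty]
  omega

theorem potential_le_insert_of_force (hn : 3 ≤ n) (h : Force Γ B v w) :
    potential B ≤ potential (insert w B) := by
  have hM : Finset.univ.sup (whiteLeafCount B) ≤
      Finset.univ.sup (whiteLeafCount (insert w B)) - 1 + 1 :=
    Finset.sup_le fun i _ => by
      have := whiteLeafCount_sub_one_le_of_force h i
      have := Finset.le_sup (f := whiteLeafCount (insert w B)) (Finset.mem_univ i)
      omega
  have hT := ncard_image_index_insert_of_force hn h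
  have hT' : (index '' B).ncard ≤ (index '' insert w B).ncard :=
    Set.ncard_le_ncard (Set.image_mono (Set.subset_insert w B))
  unfold potential
  omega

theorem exists_potential_le_of_rule3 (hn : 3 ≤ n) {𝒲 : Finset (Set (CatVert n fun _ => k))}
    {vf wf : Finset (Set (CatVert n fun _ => k)) → CatVert n fun _ => k}
    (h𝒲 : ∀ W ∈ 𝒲, IsWhiteComp Γ B W) (hcard : 2 ≤ 𝒲.card)
    (hforce : ∀ 𝒮 ⊆ 𝒲, 𝒮.Nonempty →
      ForceIn Γ B (⋃₀ (𝒮 : Set (Set (CatVert n fun _ => k)))) (vf 𝒮) (wf 𝒮)) :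
    ∃ 𝒮 ⊆ 𝒲, 𝒮.Nonempty ∧ potential B ≤ potential (insert (wf 𝒮) B) := by
  classical
  have hT : 2 ≤ (index '' B).ncard := by
    obtain ⟨W₁, hW₁, W₂, hW₂, hne⟩ := Finset.one_lt_card.1 hcard
    have := hforce {W₁, W₂} (Finset.insert_subset hW₁ (Finset.singleton_subset_iff.2 hW₂))
      (Finset.insert_nonempty _ _)
    rw [Finset.coe_pair, Set.sUnion_pair] at this
    exact two_le_ncard_image_index_of_forceIn_union (by omega) (h𝒲 _ hW₁) (h𝒲 _ hW₂) hne this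
  obtain ⟨q, -, hq⟩ := Finset.exists_mem_eq_sup Finset.univ Finset.univ_nonempty (whiteLeafCount B)
  -- White can keep Blue from forcing with `center q`, hence from forcing a leaf of `q`.
  obtain ⟨𝒮, h𝒮, hne, hvf⟩ := exists_subset_forcer_ne (center q) h𝒲 hcard hforce
  have hwf : ∀ j, wf 𝒮 ≠ leaf q j := fun j hj =>
    hvf (catCycle_adj_leaf_iff.1 (hj ▸ (hforce 𝒮 h𝒮 hne).2.2.2.1).symm)
  refine ⟨𝒮, h𝒮, hne, ?_⟩
  have hM : Finset.univ.sup (whiteLeafCount B) ≤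
      Finset.univ.sup (whiteLeafCount (insert (wf 𝒮) B)) :=
    hq.trans_le ((whiteLeafCount_insert_of_ne hwf).symm.le.trans
      (Finset.le_sup (Finset.mem_univ q)))
  have hT' : (index '' B).ncard ≤ (index '' insert (wf 𝒮) B).ncard :=
    Set.ncard_le_ncard (Set.image_mono (Set.subset_insert _ B))
  unfold potential
  omega

end LowerBound

end ZqGame

open SimpleGraph

/-- For the corona `C_n ∘ k K_1` (each cycle vertex receives exactly `k` pendant
leaves), with `n ≥ 3` and `k ≥ 1`, we have `Z_1(C_n ∘ k K_1) = k + 1`. -/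
theorem Z1_corona_cycle (n k : ℕ) (hn : 3 ≤ n) (hk : 1 ≤ k) :
    ZqGame.Zq (ZqGame.catCycle n (fun _ => k)) 1 = k + 1 := by
  have : NeZero n := ⟨by omega⟩
  refine le_antisymm (Nat.sInf_le (ZqGame.win_empty hn hk))
    (le_csInf ⟨_, ZqGame.win_empty hn hk⟩ fun t ht => ?_)
  rw [← ZqGame.potential_empty (n := n) hk]
  exact ht.le_of_potential _ (ZqGame.potential_univ (by omega))
    (ZqGame.potential_le_insert_add_one hn) (fun _ _ _ => ZqGame.potential_le_insert_of_force hn)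
    fun _ _ _ _ => ZqGame.exists_potential_le_of_rule3 hn
end
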